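/- For all k ≥ 1 and positive integers a_1,...,a_k, D(a_1,...,a_k) = Σ_{i=1}^{k} (−1)^{k−i} · Σ_{α} 1/(|α_1|! · ... · |α_i|!), where the inner sum is over all linear partitions α = (α_1,...,α_i) of the sequence (a_1,...,a_k) into i blocks of consecutive terms (i.e., over all ways to cut the sequence a_1,...,a_k into i nonempty consecutive blocks), and |α_j| denotes the sum of the entries of block α_j. -/

import Mathlib

/-- The matrix `B(a_1, ..., a_k)`: entry `(i,j)` is `1/(a_i + ⋯ + a_j)!` for
`i ≤ j`, is `1` for `i = j + 1`, and is `0` for `i ≥ j + 2` (0-indexed here). -/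
def Bmat {k : ℕ} (a : Fin k → ℕ) : Matrix (Fin k) (Fin k) ℚ :=
  Matrix.of fun i j =>
    if (i : ℕ) ≤ (j : ℕ) then
      (1 : ℚ) / (Nat.factorial (∑ m ∈ Finset.Icc i j, a m) : ℚ)
    else if (i : ℕ) = (j : ℕ) + 1 then 1
    else 0

/-- `D(a_1, ..., a_k) = det B(a_1, ..., a_k)`. -/
def D {k : ℕ} (a : Fin k → ℕ) : ℚ := (Bmat a).det

/-- Extension of a `Fin k`-indexed sequence to `ℕ` by zero. -/
def extseq {k : ℕ} (a : Fin k → ℕ) : ℕ → ℕ := fun m => if h : m < k then a ⟨m, h⟩ else 0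

lemma extseq_lt {k : ℕ} (a : Fin k → ℕ) {m : ℕ} (h : m < k) : extseq a m = a ⟨m, h⟩ :=
  dif_pos h

/-- merged sequence on ℕ. -/
def mergeN (b : ℕ → ℕ) : ℕ → ℕ := fun m => if m = 0 then b 0 + b 1 else b (m + 1)

/-- merged sequence on Fin. -/
def mergeF {n : ℕ} (a : Fin (n + 2) → ℕ) : Fin (n + 1) → ℕ :=
  fun i => if (i : ℕ) = 0 then a 0 + a 1 else a i.succ

lemma sum_Icc_fin {k : ℕ} (a : Fin k → ℕ) (i j : Fin k) :
    ∑ m ∈ Finset.Icc i j, a m = ∑ m ∈ Finset.Icc (i : ℕ) (j : ℕ), extseq a m := by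
  rw [← Fin.map_valEmbedding_Icc, Finset.sum_map]
  refine Finset.sum_congr rfl fun m _ => ?_
  simp [extseq]

lemma sum_Icc_shift (b : ℕ → ℕ) (i j : ℕ) :
    ∑ m ∈ Finset.Icc i j, b (m + 1) = ∑ m ∈ Finset.Icc (i+1) (j+1), b m := by
  rw [← Finset.Ico_add_one_right_eq_Icc, ← Finset.Ico_add_one_right_eq_Icc, Finset.sum_Ico_eq_sum_range,
    Finset.sum_Ico_eq_sum_range]
  have : j + 1 + 1 - (i + 1) = j + 1 - i := by omega
  rw [this]
  refine Finset.sum_congr rfl fun m _ => ?_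
  congr 1; omega

lemma sum_Icc_zero_mergeN (b : ℕ → ℕ) (j : ℕ) :
    ∑ m ∈ Finset.Icc 0 j, mergeN b m = ∑ m ∈ Finset.Icc 0 (j+1), b m := by
  induction j with
  | zero =>
    simp [mergeN, Finset.sum_Icc_succ_top (Nat.zero_le 1) b]
  | succ j ih =>
    rw [Finset.sum_Icc_succ_top (Nat.zero_le _), ih, Finset.sum_Icc_succ_top (Nat.zero_le _),
      Finset.sum_Icc_succ_top (Nat.zero_le _)]
    simp only [mergeN, Nat.succ_ne_zero, if_false]
    rw [Finset.sum_Icc_succ_top (Nat.zero_le _)]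

lemma sum_Icc_mergeN (b : ℕ → ℕ) (i j : ℕ) (hi : 1 ≤ i) :
    ∑ m ∈ Finset.Icc i j, mergeN b m = ∑ m ∈ Finset.Icc (i+1) (j+1), b m := by
  rw [← sum_Icc_shift]
  refine Finset.sum_congr rfl fun m hm => ?_
  have : m ≠ 0 := by simp only [Finset.mem_Icc] at hm; omega
  simp [mergeN, this]

lemma extseq_succ {n : ℕ} (a : Fin (n + 1) → ℕ) :
    extseq (a ∘ Fin.succ) = fun m => extseq a (m + 1) := by
  funext m
  simp only [extseq, Function.comp]
  split_ifs with h1 h2 h2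
  · congr 1
  · omega
  · omega
  · rfl

lemma extseq_mergeF {n : ℕ} (a : Fin (n + 2) → ℕ) :
    extseq (mergeF a) = mergeN (extseq a) := by
  funext m
  simp only [extseq, mergeN, mergeF]
  rcases Nat.eq_zero_or_pos m with rfl | hm
  · norm_num
  · have h0 : m ≠ 0 := by omega
    simp only [h0, if_false]
    split_ifs with h1 h2 h2
    · congr 1
    · omega
    · omega
    · rfl

lemma Bmat_submatrix_succ {n : ℕ} (a : Fin (n + 2) → ℕ) :
    (Bmat a).submatrix Fin.succ Fin.succ = Bmat (a ∘ Fin.succ) := by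
  ext i j
  simp only [Matrix.submatrix_apply, Bmat, Matrix.of_apply, Fin.val_succ]
  have hc : (i : ℕ) + 1 ≤ (j : ℕ) + 1 ↔ (i : ℕ) ≤ (j : ℕ) := by omega
  have hc2 : (i : ℕ) + 1 = (j : ℕ) + 1 + 1 ↔ (i : ℕ) = (j : ℕ) + 1 := by omega
  rw [if_congr hc rfl (if_congr hc2 rfl rfl)]
  congr 2
  rw [sum_Icc_fin, sum_Icc_fin, extseq_succ, sum_Icc_shift]
  simp

lemma Bmat_submatrix_merge {n : ℕ} (a : Fin (n + 2) → ℕ) :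
    (Bmat a).submatrix (Fin.succAbove 1) Fin.succ = Bmat (mergeF a) := by
  ext i j
  simp only [Matrix.submatrix_apply, Bmat, Matrix.of_apply]
  rcases Nat.eq_zero_or_pos (i : ℕ) with h0 | h0
  · have hi : i = 0 := by exact Fin.ext h0
    subst hi
    have hsa : (1 : Fin (n+2)).succAbove 0 = 0 := by
      simp [Fin.succAbove, Fin.lt_iff_val_lt_val]
    rw [hsa]
    simp only [Fin.val_zero, Nat.zero_le, if_true, Fin.val_succ]
    congr 2
    rw [sum_Icc_fin, sum_Icc_fin, extseq_mergeF]
    simp only [Fin.val_zero, Fin.val_succ]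
    rw [sum_Icc_zero_mergeN]
  · have hsa : (1 : Fin (n+2)).succAbove i = i.succ := by
      rw [Fin.succAbove]
      have : ¬ (i.castSucc < 1) := by
        intro h; rw [Fin.lt_iff_val_lt_val, Fin.coe_castSucc, Fin.val_one] at h; omega
      simp [this]
    rw [hsa]
    simp only [Fin.val_succ]
    have hc : (i : ℕ) + 1 ≤ (j : ℕ) + 1 ↔ (i : ℕ) ≤ (j : ℕ) := by omega
    have hc2 : (i : ℕ) + 1 = (j : ℕ) + 1 + 1 ↔ (i : ℕ) = (j : ℕ) + 1 := by omega
    rw [if_congr hc rfl (if_congr hc2 rfl rfl)]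
    congr 2
    rw [sum_Icc_fin, sum_Icc_fin, extseq_mergeF]
    simp only [Fin.val_succ]
    rw [sum_Icc_mergeN _ _ _ h0]

lemma D_one (a : Fin 1 → ℕ) : D a = 1 / (Nat.factorial (a 0) : ℚ) := by
  simp [D, Matrix.det_fin_one, Bmat]

lemma D_rec {n : ℕ} (a : Fin (n + 2) → ℕ) :
    D a = 1 / (Nat.factorial (a 0) : ℚ) * D (a ∘ Fin.succ) - D (mergeF a) := by
  rw [D, Matrix.det_succ_column_zero]
  rw [Fin.sum_univ_succ, Fin.sum_univ_succ]
  have h2 : ∀ i : Fin n, Bmat a i.succ.succ 0 = 0 := by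
    intro i
    simp only [Bmat, Matrix.of_apply, Fin.val_succ, Fin.val_zero]
    simp
  simp only [h2, mul_zero, zero_mul, Finset.sum_const_zero, add_zero]
  have hA00 : Bmat a 0 0 = 1 / (Nat.factorial (a 0) : ℚ) := by
    simp [Bmat]
  have h1 : (0 : Fin (n+1)).succ = (1 : Fin (n+2)) := by
    ext; simp
  have hA10 : Bmat a (1 : Fin (n+2)) 0 = 1 := by
    simp only [Bmat, Matrix.of_apply, Fin.val_one, Fin.val_zero]
    rw [if_neg (by omega)]
    simp
  rw [h1, hA00, hA10, Fin.succAbove_zero, Bmat_submatrix_succ, Bmat_submatrix_merge]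
  simp only [Fin.val_zero, Fin.val_one, pow_zero, pow_one, one_mul, mul_one, neg_one_mul, D]
  ring

/-- Product of reciprocal factorials of block sums, on lists, with a start offset. -/
def Plist (b : ℕ → ℕ) : ℕ → List ℕ → ℚ
  | _, [] => 1
  | s, x :: L => ((1:ℚ) / ((∑ m ∈ Finset.Ico s (s+x), b m).factorial : ℚ)) * Plist b (s+x) L

def G (k : ℕ) (b : ℕ → ℕ) : ℚ :=
  ∑ c : Composition k, (-1 : ℚ) ^ (k - c.length) * Plist b 0 c.blocks

lemma sum_Ico_shift (b : ℕ → ℕ) (i j : ℕ) :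
    ∑ m ∈ Finset.Ico i j, b (m + 1) = ∑ m ∈ Finset.Ico (i+1) (j+1), b m := by
  rw [Finset.sum_Ico_eq_sum_range, Finset.sum_Ico_eq_sum_range]
  have : j + 1 - (i + 1) = j - i := by omega
  rw [this]
  refine Finset.sum_congr rfl fun m _ => ?_
  congr 1; omega

lemma Plist_shift (b : ℕ → ℕ) (L : List ℕ) (s : ℕ) :
    Plist b (s + 1) L = Plist (fun m => b (m + 1)) s L := by
  induction L generalizing s with
  | nil => rfl
  | cons x L ih =>
    simp only [Plist]
    rw [show s + 1 + x = (s + x) + 1 by omega, ih]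
    congr 3
    rw [sum_Ico_shift]

lemma Plist_mergeN (b : ℕ → ℕ) (L : List ℕ) (s : ℕ) (hs : 1 ≤ s) :
    Plist (mergeN b) s L = Plist b (s + 1) L := by
  induction L generalizing s with
  | nil => rfl
  | cons x L ih =>
    simp only [Plist]
    rw [ih (s + x) (by omega)]
    have harg : s + 1 + x = s + x + 1 := by omega
    rw [harg]
    congr 2
    have : ∀ m ∈ Finset.Ico s (s + x), mergeN b m = b (m + 1) := by
      intro m hm
      have : m ≠ 0 := by simp only [Finset.mem_Ico] at hm; omega
      simp [mergeN, this]
    rw [Finset.sum_congr rfl this, sum_Ico_shift]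

lemma Plist_cons_one (b : ℕ → ℕ) (L : List ℕ) :
    Plist b 0 (1 :: L) = (1 / ((b 0).factorial : ℚ)) * Plist (fun m => b (m + 1)) 0 L := by
  simp only [Plist, Plist_shift]
  norm_num

lemma Plist_cons_big (b : ℕ → ℕ) (L : List ℕ) (x : ℕ) (hx : 1 ≤ x) :
    Plist b 0 ((x + 1) :: L) = Plist (mergeN b) 0 (x :: L) := by
  simp only [Plist]
  rw [show (0:ℕ) + x = x from by omega, show (0:ℕ) + (x+1) = x + 1 from by omega,
    Plist_mergeN b L x hx]
  congr 2
  have h1 : ∑ m ∈ Finset.Ico 0 x, mergeN b m = ∑ m ∈ Finset.Ico 0 (x+1), b m := by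
    have e0 : Finset.Ico 0 x = Finset.Icc 0 (x - 1) := by
      rw [← Finset.Ico_add_one_right_eq_Icc]; congr 1; omega
    have e1 : Finset.Ico 0 (x+1) = Finset.Icc 0 x := by
      rw [← Finset.Ico_add_one_right_eq_Icc]
    rw [e0, e1]
    rw [sum_Icc_zero_mergeN]
    have hxx : x - 1 + 1 = x := by omega
    rw [hxx]
  rw [h1]

lemma prod_offset (b : ℕ → ℕ) (L : List ℕ) (s : ℕ) :
    ∏ j : Fin L.length,
      (1:ℚ) / ((∑ m ∈ Finset.Ico (s + (L.take j).sum) (s + (L.take (j+1)).sum), b m).factorial : ℚ)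
      = Plist b s L := by
  induction L generalizing s with
  | nil => simp [Plist]
  | cons x L ih =>
    simp only [List.length_cons]
    rw [Fin.prod_univ_succ]
    simp only [Plist]
    rw [← ih (s + x)]
    refine congrArg₂ (· * ·) ?_ ?_
    · simp
    · refine Finset.prod_congr rfl fun j _ => ?_
      have e1 : s + (List.take (↑j.succ) (x :: L)).sum = s + x + (List.take (↑j) L).sum := by
        rw [Fin.val_succ, List.take_succ_cons, List.sum_cons]
        omega
      have e2 : s + (List.take (↑j.succ + 1) (x :: L)).sum = s + x + (List.take (↑j + 1) L).sum := by
        rw [Fin.val_succ, List.take_succ_cons, List.sum_cons]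
        omega
      rw [e1, e2]

lemma innerBlockSum {k : ℕ} (c : Composition k) (a : Fin k → ℕ) (j : Fin c.length) :
    ∑ m : Fin (c.blocksFun j), a (c.embedding j m)
      = ∑ m ∈ Finset.Ico (c.sizeUpTo j) (c.sizeUpTo (j + 1)), extseq a m := by
  rw [c.sizeUpTo_succ' j, Finset.sum_Ico_eq_sum_range]
  have h : c.sizeUpTo j + c.blocksFun j - c.sizeUpTo j = c.blocksFun j := by omega
  rw [h, Finset.sum_range fun m => extseq a (c.sizeUpTo j + m)]
  refine Finset.sum_congr rfl fun m _ => ?_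
  have hlt : c.sizeUpTo (j : ℕ) + (m : ℕ) < k := by
    have := (c.embedding j m).isLt
    rwa [c.coe_embedding j m] at this
  rw [extseq, dif_pos hlt]
  exact congrArg a (Fin.ext (c.coe_embedding j m))

lemma prod_eq_Plist {k : ℕ} (c : Composition k) (a : Fin k → ℕ) :
    (∏ j : Fin c.length,
      (1 : ℚ) / (Nat.factorial (∑ m : Fin (c.blocksFun j), a (c.embedding j m)) : ℚ))
      = Plist (extseq a) 0 c.blocks := by
  rw [← prod_offset (extseq a) c.blocks 0]
  refine Finset.prod_congr rfl fun j _ => ?_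
  rw [innerBlockSum]
  have e1 : c.sizeUpTo (j : ℕ) = 0 + (c.blocks.take (j : ℕ)).sum := by
    simp [Composition.sizeUpTo]
  have e2 : c.sizeUpTo ((j : ℕ) + 1) = 0 + (c.blocks.take ((j : ℕ) + 1)).sum := by
    simp [Composition.sizeUpTo]
  rw [← e1, ← e2]

lemma headI_tail_eq {l : List ℕ} (h : l ≠ []) : l.headI :: l.tail = l := by
  cases l with
  | nil => exact absurd rfl h
  | cons x L => rfl

lemma blocks_ne_nil {n : ℕ} (hn : 0 < n) (c : Composition n) : c.blocks ≠ [] := by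
  have h := c.length_pos_of_pos hn
  have : c.blocks.length ≠ 0 := by
    rw [c.blocks_length]; omega
  exact fun hc => this (by rw [hc]; rfl)

lemma headI_pos {n : ℕ} (hn : 0 < n) (c : Composition n) : 0 < c.blocks.headI := by
  apply c.blocks_pos
  rw [← headI_tail_eq (blocks_ne_nil hn c)]
  exact List.mem_cons_self

lemma sum_headI_tail {n : ℕ} (hn : 0 < n) (c : Composition n) :
    c.blocks.headI + c.blocks.tail.sum = n := by
  conv_rhs => rw [← c.blocks_sum, ← headI_tail_eq (blocks_ne_nil hn c)]
  rfl

/-- prepend a `1` block. -/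
def cons1 {n : ℕ} (c : Composition n) : Composition (n + 1) where
  blocks := 1 :: c.blocks
  blocks_pos := by
    intro i hi
    rcases List.mem_cons.1 hi with rfl | h
    · exact one_pos
    · exact c.blocks_pos h
  blocks_sum := by rw [List.sum_cons, c.blocks_sum]; omega

/-- grow the first block by one. -/
def consBig {n : ℕ} (c : Composition n) : Composition (n + 1) where
  blocks := (c.blocks.headI + 1) :: c.blocks.tail
  blocks_pos := by
    intro i hi
    rcases List.mem_cons.1 hi with rfl | h
    · omega
    · exact c.blocks_pos (List.mem_of_mem_tail h)
  blocks_sum := by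
    have : c.blocks.headI + c.blocks.tail.sum = c.blocks.sum := by
      cases hb : c.blocks with
      | nil => simp
      | cons x L => simp
    simp only [List.sum_cons]
    rw [c.blocks_sum] at this
    omega

lemma G_one (b : ℕ → ℕ) : G 1 b = 1 / ((b 0).factorial : ℚ) := by
  have huniq : ∀ c : Composition 1, c = Composition.ones 1 := by
    intro c
    rw [Composition.eq_ones_iff_le_length]
    exact c.length_pos_of_pos one_pos
  rw [G]
  rw [Finset.sum_eq_single_of_mem (Composition.ones 1) (Finset.mem_univ _)
    (fun c _ hc => absurd (huniq c) hc)]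
  have hb : (Composition.ones 1).blocks = [1] := rfl
  have hl : (Composition.ones 1).length = 1 := rfl
  rw [hb, hl]
  simp [Plist]

lemma G_rec {n : ℕ} (hn : 1 ≤ n) (b : ℕ → ℕ) :
    G (n + 1) b = 1 / ((b 0).factorial : ℚ) * G n (fun m => b (m + 1)) - G n (mergeN b) := by
  classical
  rw [G, ← Finset.sum_filter_add_sum_filter_not Finset.univ
    (fun c : Composition (n+1) => c.blocks.headI = 1)]
  have h1 : ∑ c ∈ Finset.univ.filter (fun c : Composition (n+1) => c.blocks.headI = 1),
      (-1 : ℚ) ^ (n + 1 - c.length) * Plist b 0 c.blocks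
      = 1 / ((b 0).factorial : ℚ) * G n (fun m => b (m + 1)) := by
    rw [G, Finset.mul_sum]
    refine Finset.sum_bij' (fun c _ => (⟨c.blocks.tail, ?_, ?_⟩ : Composition n))
      (fun c _ => cons1 c) ?_ ?_ ?_ ?_ ?_
    · exact fun hi => c.blocks_pos (List.mem_of_mem_tail hi)
    · have := sum_headI_tail (Nat.succ_pos n) c
      have hh : c.blocks.headI = 1 := by
        have := Finset.mem_filter.1 ‹c ∈ _›
        exact this.2
      omega
    · intro c _; exact Finset.mem_univ _
    · intro c _
      simp only [Finset.mem_filter, Finset.mem_univ, true_and, cons1]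
      rfl
    · intro c hc
      apply Composition.ext
      simp only [cons1]
      have hh : c.blocks.headI = 1 := (Finset.mem_filter.1 hc).2
      conv_rhs => rw [← headI_tail_eq (blocks_ne_nil (Nat.succ_pos n) c), hh]
    · intro c _
      apply Composition.ext
      rfl
    · intro c hc
      have hh : c.blocks.headI = 1 := (Finset.mem_filter.1 hc).2
      have hb : c.blocks = 1 :: c.blocks.tail := by
        conv_lhs => rw [← headI_tail_eq (blocks_ne_nil (Nat.succ_pos n) c), hh]
      rw [congrArg (Plist b 0) hb, Plist_cons_one]
      have hlen : c.length = c.blocks.tail.length + 1 := by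
        rw [← c.blocks_length]
        conv_lhs => rw [hb]
        rfl
      have hsign : n + 1 - c.length = n - c.blocks.tail.length := by omega
      rw [hsign]
      ring
  have h2 : ∑ c ∈ Finset.univ.filter (fun c : Composition (n+1) => ¬ c.blocks.headI = 1),
      (-1 : ℚ) ^ (n + 1 - c.length) * Plist b 0 c.blocks
      = - G n (mergeN b) := by
    rw [G, ← Finset.sum_neg_distrib]
    refine Finset.sum_bij' (fun c hc => (⟨(c.blocks.headI - 1) :: c.blocks.tail, ?_, ?_⟩ :
      Composition n)) (fun c _ => consBig c) ?_ ?_ ?_ ?_ ?_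
    · intro i hi
      have h2le : 2 ≤ c.blocks.headI := by
        have hne : ¬ c.blocks.headI = 1 := (Finset.mem_filter.1 hc).2
        have := headI_pos (Nat.succ_pos n) c
        omega
      rcases List.mem_cons.1 hi with rfl | h
      · omega
      · exact c.blocks_pos (List.mem_of_mem_tail h)
    · have hsum := sum_headI_tail (Nat.succ_pos n) c
      have hpos := headI_pos (Nat.succ_pos n) c
      simp only [List.sum_cons]
      omega
    · intro c _; exact Finset.mem_univ _
    · intro c _
      simp only [Finset.mem_filter, Finset.mem_univ, true_and]
      show ¬ ((c.blocks.headI + 1) :: c.blocks.tail).headI = 1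
      simp only [List.headI_cons]
      have := headI_pos hn c
      omega
    · intro c hc
      apply Composition.ext
      simp only [consBig, List.headI_cons, List.tail_cons]
      have hpos := headI_pos (Nat.succ_pos n) c
      have hh : c.blocks.headI - 1 + 1 = c.blocks.headI := by omega
      rw [hh]
      exact headI_tail_eq (blocks_ne_nil (Nat.succ_pos n) c)
    · intro c _
      apply Composition.ext
      simp only [consBig, List.headI_cons, List.tail_cons, Nat.add_sub_cancel]
      exact headI_tail_eq (blocks_ne_nil hn c)
    · intro c hc
      have h2le : 2 ≤ c.blocks.headI := by
        have hne : ¬ c.blocks.headI = 1 := (Finset.mem_filter.1 hc).2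
        have := headI_pos (Nat.succ_pos n) c
        omega
      have hb : c.blocks = (c.blocks.headI - 1 + 1) :: c.blocks.tail := by
        conv_lhs => rw [← headI_tail_eq (blocks_ne_nil (Nat.succ_pos n) c)]
        congr 1
        omega
      rw [congrArg (Plist b 0) hb, Plist_cons_big _ _ _ (by omega)]
      have hlen : c.length = c.blocks.tail.length + 1 := by
        rw [← c.blocks_length]
        conv_lhs => rw [hb]
        rfl
      have hle : c.blocks.tail.length + 1 ≤ n := by
        have h1' : c.blocks.tail.length ≤ c.blocks.tail.sum :=
          List.length_le_sum_of_one_le _ (fun i hi => c.blocks_pos (List.mem_of_mem_tail hi))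
        have hsum := sum_headI_tail (Nat.succ_pos n) c
        omega
      simp only [Composition.length, List.length_cons]
      rw [c.blocks_length]
      have hsign : n + 1 - c.length = (n - (c.blocks.tail.length + 1)) + 1 := by omega
      rw [hsign, pow_succ]
      ring
  rw [h1, h2]
  ring

lemma rhs_eq_G {k : ℕ} (hk : 1 ≤ k) (a : Fin k → ℕ) :
    (∑ i ∈ Finset.Icc 1 k, (-1 : ℚ) ^ (k - i) *
      ∑ c ∈ Finset.univ.filter (fun c : Composition k => c.length = i),
        ∏ j : Fin c.length,
          (1 : ℚ) / (Nat.factorial (∑ m : Fin (c.blocksFun j), a (c.embedding j m)) : ℚ))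
      = G k (extseq a) := by
  rw [G]
  rw [← Finset.sum_fiberwise_of_maps_to
    (fun (c : Composition k) _ => Finset.mem_Icc.2 ⟨c.length_pos_of_pos hk, c.length_le⟩)
    (fun c => (-1 : ℚ) ^ (k - c.length) * Plist (extseq a) 0 c.blocks)]
  refine Finset.sum_congr rfl fun i _ => ?_
  rw [Finset.mul_sum]
  refine Finset.sum_congr rfl fun c hc => ?_
  have hlen : c.length = i := (Finset.mem_filter.1 hc).2
  rw [prod_eq_Plist, hlen]

lemma main_ind : ∀ n : ℕ, ∀ a : Fin (n + 1) → ℕ, D a = G (n + 1) (extseq a) := by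
  intro n
  induction n with
  | zero =>
    intro a
    rw [D_one, G_one]
    congr 2
  | succ n ih =>
    intro a
    rw [D_rec, ih (a ∘ Fin.succ), ih (mergeF a), extseq_succ, extseq_mergeF,
      G_rec (Nat.succ_le_succ (Nat.zero_le n)) (extseq a)]
    congr 3

/-- A closed formula for `D(a_1, ..., a_k)`: a signed sum over all linear
partitions of the sequence `(a_1, ..., a_k)` into consecutive blocks (encoded
as compositions of `k`), the term of a partition into `i` blocks being
`(-1)^(k-i)` times the product over the blocks of `1/(block sum)!`. -/
theorem D_eq_sum_linear_partitions (k : ℕ) (hk : 1 ≤ k) (a : Fin k → ℕ)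
    (ha : ∀ i, 0 < a i) :
    D a = ∑ i ∈ Finset.Icc 1 k, (-1 : ℚ) ^ (k - i) *
      ∑ c ∈ Finset.univ.filter (fun c : Composition k => c.length = i),
        ∏ j : Fin c.length,
          (1 : ℚ) / (Nat.factorial (∑ m : Fin (c.blocksFun j), a (c.embedding j m)) : ℚ) := by
  rw [rhs_eq_G hk a]
  cases k with
  | zero => omega
  | succ n => exact main_ind n a
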